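/- For every general source p̄ = (p_n) and every ε with 0 ≤ ε < 1: S₊(ε|p̄) := sup over all sequences of operations (Ψ_n) with limsup_n ε(Ψ_n) ≤ ε of liminf_n (1/n) log|Ψ_n| equals H̲₊(ε|p̄) := sup{a ∈ ℝ : limsup_n p_n{−(1/n) log p_n(ω) < a} ≤ ε}; moreover S₊†(ε|p̄) := sup over sequences with liminf_n ε(Ψ_n) ≤ ε of liminf_n (1/n) log|Ψ_n| and S₊‡(ε|p̄) := sup over sequences with limsup_n ε(Ψ_n) ≤ ε of limsup_n (1/n) log|Ψ_n| both equal H̄₊(ε|p̄) := sup{a ∈ ℝ : liminf_n p_n{−(1/n) log p_n(ω) < a} ≤ ε}. -/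

import Mathlib

open Filter

noncomputable section

/-- The probability of a set `S` under a probability mass function `p`. -/
def prob {Ω : Type*} (p : Ω → ℝ) (S : Set Ω) : ℝ := ∑' ω : S, p ω

/-- Push-forward of `p` under `φ : Ω → Fin M`. -/
def push {Ω : Type*} {M : ℕ} (p : Ω → ℝ) (φ : Ω → Fin M) : Fin M → ℝ :=
  fun i => prob p {ω | φ ω = i}

/-- The uniform distribution on `Fin M`. -/
def unif (M : ℕ) : Fin M → ℝ := fun _ => 1 / (M : ℝ)

/-- Half the variational distance between two distributions on `Fin M`. -/
def tvHalf {M : ℕ} (q r : Fin M → ℝ) : ℝ := (1 / 2) * ∑ i, |q i - r i|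

/-- The error of the operation `(M, φ)` applied to the source distribution `p`:
half the variational distance between the push-forward of `p` under `φ` and the
uniform distribution on `Fin M`. -/
def opErr {Ω : Type*} {M : ℕ} (p : Ω → ℝ) (φ : Ω → Fin M) : ℝ :=
  tvHalf (push p φ) (unif M)




section Basic
variable {Ω : Type*} {p : Ω → ℝ}

lemma prob_eq_indicator (S : Set Ω) : prob p S = ∑' ω, S.indicator p ω :=
  tsum_subtype S p

lemma prob_nonneg (h : ∀ ω, 0 ≤ p ω) (S : Set Ω) : 0 ≤ prob p S :=
  tsum_nonneg (fun ω => h ω)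

lemma prob_mono (hp : Summable p) (h : ∀ ω, 0 ≤ p ω) {S T : Set Ω} (hST : S ⊆ T) :
    prob p S ≤ prob p T := by
  rw [prob_eq_indicator, prob_eq_indicator]
  exact Summable.tsum_le_tsum (fun ω => Set.indicator_le_indicator_of_subset hST h ω)
    (hp.indicator S) (hp.indicator T)

lemma prob_union_le (hp : Summable p) (h : ∀ ω, 0 ≤ p ω) (S T : Set Ω) :
    prob p (S ∪ T) ≤ prob p S + prob p T := by
  rw [prob_eq_indicator, prob_eq_indicator, prob_eq_indicator, ← Summable.tsum_add (hp.indicator S) (hp.indicator T)]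
  refine Summable.tsum_le_tsum (fun ω => ?_) (hp.indicator _) ((hp.indicator S).add (hp.indicator T))
  by_cases hS : ω ∈ S <;> by_cases hT : ω ∈ T <;>
    simp [Set.indicator_of_mem, Set.indicator_of_notMem, hS, hT, h ω]

lemma prob_zero_set (h : ∀ ω, 0 ≤ p ω) {S : Set Ω} (hS : ∀ ω ∈ S, p ω = 0) :
    prob p S = 0 := by
  rw [prob_eq_indicator]
  convert tsum_zero with ω
  by_cases hω : ω ∈ S
  · simp [Set.indicator_of_mem hω, hS ω hω]
  · simp [Set.indicator_of_notMem hω]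

lemma prob_le_one (hp : HasSum p 1) (h : ∀ ω, 0 ≤ p ω) (S : Set Ω) : prob p S ≤ 1 := by
  rw [prob_eq_indicator, ← hp.tsum_eq]
  exact Summable.tsum_le_tsum (fun ω => Set.indicator_le_self' (fun x _ => h x) ω)
    (hp.summable.indicator S) hp.summable

lemma sum_push (hp : HasSum p 1) {M : ℕ} (φ : Ω → Fin M) :
    ∑ i, push p φ i = 1 := by
  have h1 : ∑' ω, p ω = 1 := hp.tsum_eq
  have := (Equiv.sigmaFiberEquiv φ).tsum_eq p
  rw [← this] at h1
  rw [Summable.tsum_sigma ?_] at h1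
  · rw [← h1, tsum_fintype]
    rfl
  · exact hp.summable.comp_injective (Equiv.sigmaFiberEquiv φ).injective

lemma tv_identity {M : ℕ} (q r : Fin M → ℝ) (h : ∑ i, q i = ∑ i, r i) :
    tvHalf q r = ∑ i, max 0 (r i - q i) := by
  have key : ∀ x : ℝ, |x| = 2 * max 0 (-x) + x := by
    intro x; rcases le_or_gt 0 x with hx | hx
    · rw [abs_of_nonneg hx, max_eq_left (by linarith)]; ring
    · rw [abs_of_neg hx, max_eq_right (by linarith)]; ring
  unfold tvHalf
  have : ∑ i, |q i - r i| = ∑ i, (2 * max 0 (r i - q i) + (q i - r i)) := by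
    refine Finset.sum_congr rfl fun i _ => ?_
    rw [key (q i - r i)]; ring_nf
  rw [this, Finset.sum_add_distrib, Finset.sum_sub_distrib, h, sub_self, add_zero,
    ← Finset.mul_sum]
  ring

lemma tv_identity' {M : ℕ} (q r : Fin M → ℝ) (h : ∑ i, q i = ∑ i, r i) :
    tvHalf q r = ∑ i, max 0 (q i - r i) := by
  have : tvHalf q r = tvHalf r q := by
    unfold tvHalf; congr 1; exact Finset.sum_congr rfl fun i _ => abs_sub_comm _ _
  rw [this, tv_identity r q h.symm]

end Basic



section Conv
variable {Ω : Type*} {p : Ω → ℝ}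

lemma sum_unif {M : ℕ} (hM : 0 < M) : ∑ i, unif M i = 1 := by
  simp [unif, Finset.sum_const, Finset.card_univ]
  field_simp

lemma prob_preimage_finset (hp : Summable p) {M : ℕ} (φ : Ω → Fin M) (S : Finset (Fin M)) :
    prob p {ω | φ ω ∈ S} = ∑ i ∈ S, push p φ i := by
  have hpoint : ∀ ω, ({ω | φ ω ∈ S} : Set Ω).indicator p ω
      = ∑ i ∈ S, ({ω | φ ω = i} : Set Ω).indicator p ω := by
    intro ω
    simp only [Set.indicator_apply, Set.mem_setOf_eq]
    by_cases hω : φ ω ∈ S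
    · rw [if_pos hω, Finset.sum_eq_single (φ ω)]
      · rw [if_pos rfl]
      · intro i _ hne
        exact if_neg (fun (h : φ ω = i) => hne h.symm)
      · intro h; exact absurd hω h
    · rw [if_neg hω]
      symm
      refine Finset.sum_eq_zero fun i hi => ?_
      exact if_neg (fun (h : φ ω = i) => hω (h.symm ▸ hi))
  rw [prob_eq_indicator]
  calc ∑' ω, ({ω | φ ω ∈ S} : Set Ω).indicator p ω
      = ∑' ω, ∑ i ∈ S, ({ω | φ ω = i} : Set Ω).indicator p ω := by
        exact tsum_congr hpoint
    _ = ∑ i ∈ S, ∑' ω, ({ω | φ ω = i} : Set Ω).indicator p ω := by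
        exact Summable.tsum_finsetSum (fun i _ => hp.indicator _)
    _ = ∑ i ∈ S, push p φ i := by
        refine Finset.sum_congr rfl fun i _ => ?_
        rw [push, prob_eq_indicator]

lemma converse_bound (hp : HasSum p 1) (hnn : ∀ ω, 0 ≤ p ω) {M : ℕ} (hM : 0 < M)
    (φ : Ω → Fin M) {c : ℝ} (hc : 0 < c) :
    prob p {ω | c < p ω} ≤ opErr p φ + 1 / (c * M) := by
  -- A is finite
  have hfin : ({ω | c < p ω} : Set Ω).Finite := by
    have := hp.summable.tendsto_cofinite_zero
    have hev : ∀ᶠ ω in cofinite, |p ω - 0| < c := by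
      exact Metric.tendsto_nhds.mp this c hc
    rw [Filter.eventually_cofinite] at hev
    refine hev.subset fun ω hω => ?_
    simp only [Set.mem_setOf_eq] at hω ⊢
    rw [sub_zero, abs_of_nonneg (hnn ω)]
    exact not_lt.2 hω.le
  set A := hfin.toFinset with hA
  -- card bound
  have hcard : (A.card : ℝ) * c ≤ 1 := by
    have h1 : ∀ ω ∈ A, c ≤ p ω := fun ω hω => (by simpa [hA] using hω : c < p ω).le
    have h2 : (A.card : ℝ) * c ≤ ∑ ω ∈ A, p ω := by
      calc (A.card : ℝ) * c = ∑ _ω ∈ A, c := by rw [Finset.sum_const, nsmul_eq_mul]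
        _ ≤ ∑ ω ∈ A, p ω := Finset.sum_le_sum h1
    have h3 : ∑ ω ∈ A, p ω ≤ 1 := by
      rw [← hp.tsum_eq]
      exact Summable.sum_le_tsum A (fun ω _ => hnn ω) hp.summable
    linarith
  set S := A.image φ with hS
  have hsub : {ω | c < p ω} ⊆ {ω | φ ω ∈ S} := by
    intro ω hω
    exact Finset.mem_image_of_mem φ (hfin.mem_toFinset.2 hω)
  have h4 : prob p {ω | c < p ω} ≤ ∑ i ∈ S, push p φ i := by
    rw [← prob_preimage_finset hp.summable φ S]
    exact prob_mono hp.summable hnn hsub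
  have h5 : ∑ i ∈ S, push p φ i ≤ (S.card : ℝ) * (1 / M) + opErr p φ := by
    have : ∀ i ∈ S, push p φ i ≤ 1 / M + max 0 (push p φ i - 1 / M) := by
      intro i _
      rcases le_or_gt (push p φ i) (1 / M) with h | h
      · linarith [le_max_left (0:ℝ) (push p φ i - 1/M)]
      · rw [max_eq_right (by linarith)]; linarith
    calc ∑ i ∈ S, push p φ i ≤ ∑ i ∈ S, (1 / M + max 0 (push p φ i - 1 / M)) :=
          Finset.sum_le_sum this
      _ = (S.card : ℝ) * (1 / M) + ∑ i ∈ S, max 0 (push p φ i - 1 / M) := by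
          rw [Finset.sum_add_distrib, Finset.sum_const, nsmul_eq_mul]
      _ ≤ (S.card : ℝ) * (1 / M) + ∑ i, max 0 (push p φ i - 1 / M) :=
          add_le_add_right (Finset.sum_le_sum_of_subset_of_nonneg (Finset.subset_univ S)
            (fun i _ _ => le_max_left _ _)) _
      _ = (S.card : ℝ) * (1 / M) + opErr p φ := by
          rw [opErr, tv_identity' _ _ (by rw [sum_push hp, sum_unif hM])]
          rfl
  have h6 : (S.card : ℝ) * (1 / M) ≤ 1 / (c * M) := by
    have hSA : (S.card : ℝ) ≤ A.card := by exact_mod_cast Finset.card_image_le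
    have hAc : (A.card : ℝ) ≤ 1 / c := by
      rw [le_div_iff₀ hc]; linarith
    have hMpos : (0:ℝ) < M := by exact_mod_cast hM
    calc (S.card : ℝ) * (1 / M) ≤ (1 / c) * (1 / M) := by
          apply mul_le_mul (hSA.trans hAc) le_rfl (by positivity) (by positivity)
      _ = 1 / (c * M) := by field_simp
  linarith
end Conv



section Direct
variable {Ω : Type*} [Countable Ω] {p : Ω → ℝ}

lemma direct_bound (hp : HasSum p 1) (hnn : ∀ ω, 0 ≤ p ω) {M : ℕ} (hM : 0 < M)
    {γ : ℝ} (hγ : 0 < γ) :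
    ∃ φ : Ω → Fin M, opErr p φ ≤ prob p {ω | γ < p ω} + M * γ + 1 / M := by
  obtain ⟨ι, hι⟩ := exists_injective_nat Ω
  set g : ℕ → ℝ := Function.extend ι p 0 with hg
  have hgι : ∀ ω, g (ι ω) = p ω := fun ω => hι.extend_apply p (0 : ℕ → ℝ) ω
  have hg0 : ∀ k, k ∉ Set.range ι → g k = 0 := by
    intro k hk
    exact Function.extend_apply' p (0 : ℕ → ℝ) k (by simpa [Set.mem_range] using hk)
  have hgnn : ∀ k, 0 ≤ g k := by
    intro k
    by_cases hk : k ∈ Set.range ι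
    · obtain ⟨ω, rfl⟩ := hk; rw [hgι]; exact hnn ω
    · rw [hg0 k hk]
  have hgsum : HasSum g 1 := by
    rw [← hι.hasSum_iff hg0]
    convert hp using 1
    funext ω; exact hgι ω
  set g' : ℕ → ℝ := fun k => if g k ≤ γ then g k else 0 with hg'
  have hg'nn : ∀ k, 0 ≤ g' k := by
    intro k; simp only [hg']; split <;> [exact hgnn k; exact le_rfl]
  have hg'le : ∀ k, g' k ≤ g k := by
    intro k; simp only [hg']; split <;> [exact le_rfl; exact hgnn k]
  have hg'γ : ∀ k, g' k ≤ γ := by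
    intro k; simp only [hg']; split <;> [assumption; exact hγ.le]
  have hg'summ : Summable g' := hgsum.summable.of_nonneg_of_le hg'nn hg'le
  set T : ℝ := ∑' k, g' k with hT
  have hTsum : HasSum g' T := hg'summ.hasSum
  have hT1 : T ≤ 1 := by
    rw [hT, ← hgsum.tsum_eq]
    exact Summable.tsum_le_tsum hg'le hg'summ hgsum.summable
  have hTnn : 0 ≤ T := tsum_nonneg hg'nn
  -- 1 - T ≤ prob of big atoms
  have h1T : 1 - T ≤ prob p {ω | γ < p ω} := by
    set B : ℕ → ℝ := fun k => if γ < g k then g k else 0 with hB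
    have hsplit : ∀ k, g k = g' k + B k := by
      intro k; simp only [hg', hB]
      rcases le_or_gt (g k) γ with h | h
      · rw [if_pos h, if_neg (not_lt.2 h), add_zero]
      · rw [if_neg (not_le.2 h), if_pos h, zero_add]
    have hBsum : Summable B := by
      refine hgsum.summable.of_nonneg_of_le (fun k => ?_) (fun k => ?_)
      · simp only [hB]; split <;> [exact hgnn k; exact le_rfl]
      · simp only [hB]; split <;> [exact le_rfl; exact hgnn k]
    have h2 : T + ∑' k, B k = 1 := by
      rw [hT, ← Summable.tsum_add hg'summ hBsum, ← hgsum.tsum_eq]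
      exact tsum_congr fun k => (hsplit k).symm
    have h3 : ∑' k, B k = prob p {ω | γ < p ω} := by
      rw [prob_eq_indicator]
      rw [← hι.tsum_eq (f := B)]
      · refine tsum_congr fun ω => ?_
        simp only [hB, hgι, Set.indicator_apply, Set.mem_setOf_eq]
      · intro k hk
        simp only [Function.mem_support, hB, ne_eq] at hk
        by_contra hrange
        rw [hg0 k hrange] at hk
        simp [hγ.not_gt] at hk
    linarith
  -- cumulative sums
  set G : ℕ → ℝ := fun k => ∑ j ∈ Finset.range k, g' j with hG
  have hGmono : Monotone G := by
    intro a b hab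
    exact Finset.sum_le_sum_of_subset_of_nonneg (Finset.range_subset_range.2 hab)
      (fun k _ _ => hg'nn k)
  have hGnn : ∀ k, 0 ≤ G k := fun k => Finset.sum_nonneg fun j _ => hg'nn j
  have hGle : ∀ k, G k ≤ T := fun k =>
    Summable.sum_le_tsum (Finset.range k) (fun j _ => hg'nn j) hg'summ
  have hGtend : Tendsto G atTop (nhds T) := hTsum.tendsto_sum_nat
  have hGsucc : ∀ k, G (k + 1) = G k + g' k := by
    intro k; simp only [hG, Finset.sum_range_succ]
  -- the map
  have hψlt : ∀ k, min (⌊(M : ℝ) * G k⌋₊) (M - 1) < M := fun k =>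
    lt_of_le_of_lt (min_le_right _ _) (by omega)
  set ψ : ℕ → Fin M := fun k => ⟨min (⌊(M : ℝ) * G k⌋₊) (M - 1), hψlt k⟩ with hψ
  refine ⟨fun ω => ψ (ι ω), ?_⟩
  set φ : Ω → Fin M := fun ω => ψ (ι ω) with hφ
  have hMpos : (0:ℝ) < M := by exact_mod_cast hM
  -- Q i lower bounds push
  set Q : Fin M → ℝ := fun i => ∑' k, ({k | ψ k = i} : Set ℕ).indicator g' k with hQ
  have hQpush : ∀ i, Q i ≤ push p φ i := by
    intro i
    have hpush : push p φ i = ∑' k, ({k | ψ k = i} : Set ℕ).indicator g k := by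
      rw [push, prob_eq_indicator]
      rw [← hι.tsum_eq (f := ({k | ψ k = i} : Set ℕ).indicator g)]
      · exact tsum_congr fun ω => by
          simp only [Set.indicator_apply, Set.mem_setOf_eq, hgι, hφ]
      · intro k hk
        simp only [Function.mem_support, ne_eq] at hk
        by_contra hrange
        rw [Set.indicator_apply] at hk
        rw [hg0 k hrange] at hk
        simp at hk
    rw [hpush, hQ]
    refine Summable.tsum_le_tsum (fun k => ?_) (hg'summ.indicator _) (hgsum.summable.indicator _)
    exact Set.indicator_le_indicator (hg'le k)
  have hQnn : ∀ i, 0 ≤ Q i := fun i =>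
    tsum_nonneg (fun k => Set.indicator_nonneg (fun j _ => hg'nn j) k)
  have hpushnn : ∀ i, 0 ≤ push p φ i := fun i => tsum_nonneg (fun ω => hnn ω)
  -- sum over an interval inside a fiber is at most Q i
  have hGQ : ∀ (i : Fin M) (a b : ℕ), (∀ k, a ≤ k → k < b → ψ k = i) →
      G b - G a ≤ Q i := by
    intro i a b hfib
    rcases le_or_gt a b with hab | hab
    · have hico : ∑ k ∈ Finset.Ico a b, g' k = G b - G a := Finset.sum_Ico_eq_sub g' hab
      have hle : ∑ k ∈ Finset.Ico a b, g' k ≤ Q i := by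
        have hcongr : ∀ k ∈ Finset.Ico a b, g' k = ({k | ψ k = i} : Set ℕ).indicator g' k := by
          intro k hk
          exact (Set.indicator_of_mem (show k ∈ {n : ℕ | ψ n = i} from
            hfib k (Finset.mem_Ico.1 hk).1 (Finset.mem_Ico.1 hk).2) g').symm
        rw [Finset.sum_congr rfl hcongr, hQ]
        exact Summable.sum_le_tsum _ (fun k _ => Set.indicator_nonneg (fun j _ => hg'nn j) k)
          (hg'summ.indicator _)
      linarith
    · have := hGmono hab.le
      have := hQnn i
      linarith
  -- the bin lower bound
  have hbin : ∀ i : Fin M, min T ((((i : ℕ) : ℝ) + 1) / M) - ((i : ℕ) : ℝ) / M - γ ≤ Q i := by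
    intro i
    by_cases htriv : min T ((((i : ℕ) : ℝ) + 1) / M) ≤ ((i : ℕ) : ℝ) / M + γ
    · have := hQnn i; linarith
    push_neg at htriv
    have hynn : (0:ℝ) ≤ ((i : ℕ) : ℝ) / M := by positivity
    have hxT : min T ((((i : ℕ) : ℝ) + 1) / M) ≤ T := min_le_left _ _
    have hyT : ((i : ℕ) : ℝ) / M < T := by linarith
    have hex : ∃ k, ((i : ℕ) : ℝ) / M ≤ G k :=
      (hGtend.eventually (eventually_ge_nhds hyT)).exists
    set a := Nat.find hex with ha
    have haGy : ((i : ℕ) : ℝ) / M ≤ G a := Nat.find_spec hex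
    have haup : G a ≤ ((i : ℕ) : ℝ) / M + γ := by
      rcases Nat.eq_zero_or_eq_succ_pred a with h0 | hsucc
      · rw [h0]
        have : G 0 = 0 := by simp [hG]
        rw [this]; linarith
      · have hpred : a - 1 < a := by omega
        have hb : ¬ ((i : ℕ) : ℝ) / M ≤ G (a - 1) := Nat.find_min hex hpred
        push_neg at hb
        have : G a = G (a - 1) + g' (a - 1) := by
          conv_lhs => rw [hsucc]
          exact hGsucc (a - 1)
        rw [this]
        have := hg'γ (a - 1)
        linarith
    have hiM1 : (i : ℕ) ≤ M - 1 := by omega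
    have hmem : ∀ k, a ≤ k → (M : ℝ) * G k < ((i : ℕ) : ℝ) + 1 → ψ k = i := by
      intro k hak hup
      apply Fin.ext
      show min (⌊(M : ℝ) * G k⌋₊) (M - 1) = (i : ℕ)
      have hGak : ((i : ℕ) : ℝ) / M ≤ G k := le_trans haGy (hGmono hak)
      have h1 : (i : ℕ) ≤ ⌊(M : ℝ) * G k⌋₊ := by
        apply Nat.le_floor
        rw [div_le_iff₀ hMpos] at hGak
        rw [mul_comm]
        exact hGak
      have h2 : ⌊(M : ℝ) * G k⌋₊ < (i : ℕ) + 1 := by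
        rw [Nat.floor_lt (mul_nonneg hMpos.le (hGnn k))]
        push_cast
        exact hup
      omega
    have hGanorm : min T ((((i : ℕ) : ℝ) + 1) / M) - ((i : ℕ) : ℝ) / M - γ ≤
        min T ((((i : ℕ) : ℝ) + 1) / M) - G a := by linarith
    refine le_trans hGanorm ?_
    by_cases hreach : ∃ k, (((i : ℕ) : ℝ) + 1) / M ≤ G k
    · set b := Nat.find hreach with hbdef
      have hGb : (((i : ℕ) : ℝ) + 1) / M ≤ G b := Nat.find_spec hreach
      have hfib : ∀ k, a ≤ k → k < b → ψ k = i := by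
        intro k hak hkb
        have : ¬ (((i : ℕ) : ℝ) + 1) / M ≤ G k := Nat.find_min hreach hkb
        push_neg at this
        exact hmem k hak (by rwa [mul_comm, ← lt_div_iff₀ hMpos])
      have h3 := hGQ i a b hfib
      have h4 : min T ((((i : ℕ) : ℝ) + 1) / M) ≤ G b :=
        le_trans (min_le_right _ _) hGb
      linarith
    · push_neg at hreach
      have hfib : ∀ b, ∀ k, a ≤ k → k < b → ψ k = i := by
        intro b k hak _
        exact hmem k hak (by rw [mul_comm, ← lt_div_iff₀ hMpos]; exact hreach k)
      have h5 : T - G a ≤ Q i := by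
        refine le_of_tendsto (hGtend.sub_const (G a)) ?_
        exact Filter.Eventually.of_forall (fun b => hGQ i a b (hfib b))
      linarith
  -- lower bound for push
  have hq_lb : ∀ i : Fin M, min T ((((i : ℕ) : ℝ) + 1) / M) - ((i : ℕ) : ℝ) / M - γ ≤
      push p φ i := fun i => le_trans (hbin i) (hQpush i)
  -- per-bin upper bound on the deficiency
  set f : ℕ → ℝ := fun j => min (1 / (M : ℝ)) (max 0 (((j : ℝ) + 1) / M - T)) with hf
  have hfnn : ∀ j, 0 ≤ f j := fun j => le_min (by positivity) (le_max_left _ _)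
  have hkey : ∀ j : ℕ, ((j : ℝ) + 1) / M - (j : ℝ) / M = 1 / M := by
    intro j
    rw [div_sub_div_same]
    ring_nf
  have hper : ∀ i : Fin M, max 0 (unif M i - push p φ i) ≤ γ + f (i : ℕ) := by
    intro i
    have hq0 := hpushnn i
    have hlb := hq_lb i
    have hu : unif M i = 1 / M := rfl
    have hkeyi := hkey (i : ℕ)
    rw [hu]
    rcases le_or_gt ((((i : ℕ) : ℝ) + 1) / M) T with hcase | hcase
    · have h1 : min T ((((i : ℕ) : ℝ) + 1) / M) = (((i : ℕ) : ℝ) + 1) / M :=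
        min_eq_right hcase
      rw [h1] at hlb
      have : 1 / (M : ℝ) - push p φ i ≤ γ := by linarith
      calc max 0 (1 / (M : ℝ) - push p φ i) ≤ γ := max_le hγ.le this
        _ ≤ γ + f (i : ℕ) := le_add_of_nonneg_right (hfnn _)
    · have h1 : min T ((((i : ℕ) : ℝ) + 1) / M) = T := min_eq_left hcase.le
      rw [h1] at hlb
      have hpos : (0:ℝ) ≤ (((i : ℕ) : ℝ) + 1) / M - T := by linarith
      rcases le_or_gt ((((i : ℕ) : ℝ) + 1) / M - T) (1 / M) with h2 | h2
      · have hfeq : f (i : ℕ) = (((i : ℕ) : ℝ) + 1) / M - T := by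
          rw [hf]; dsimp only
          rw [max_eq_right hpos, min_eq_right h2]
        rw [hfeq]
        refine max_le (by linarith [hγ.le]) ?_
        linarith
      · have hfeq : f (i : ℕ) = 1 / (M : ℝ) := by
          rw [hf]; dsimp only
          rw [max_eq_right hpos, min_eq_left h2.le]
        rw [hfeq]
        refine max_le (by positivity) ?_
        linarith
  -- counting bound
  have hcount : ∑ j ∈ Finset.range M, f j ≤ (1 - T) + 1 / M := by
    set k0 := min (⌊(M : ℝ) * T⌋₊) M with hk0
    have hk0M : k0 ≤ M := min_le_right _ _
    have hsplit : ∑ j ∈ Finset.Ico 0 k0, f j + ∑ j ∈ Finset.Ico k0 M, f j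
        = ∑ j ∈ Finset.Ico 0 M, f j :=
      Finset.sum_Ico_consecutive f (Nat.zero_le k0) hk0M
    have hzero : ∑ j ∈ Finset.Ico 0 k0, f j = 0 := by
      refine Finset.sum_eq_zero fun j hj => ?_
      have hjk : j < k0 := (Finset.mem_Ico.1 hj).2
      have hj1 : (j : ℕ) + 1 ≤ ⌊(M : ℝ) * T⌋₊ := by omega
      have hjT : ((j : ℝ) + 1) / M ≤ T := by
        rw [div_le_iff₀ hMpos, mul_comm]
        calc (j : ℝ) + 1 = ((j + 1 : ℕ) : ℝ) := by push_cast; ring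
          _ ≤ (⌊(M : ℝ) * T⌋₊ : ℝ) := by exact_mod_cast hj1
          _ ≤ (M : ℝ) * T := Nat.floor_le (by positivity)
      rw [hf]; dsimp only
      rw [max_eq_left (by linarith), min_eq_right (by positivity)]
    have hbound : ∑ j ∈ Finset.Ico k0 M, f j ≤ ((M - k0 : ℕ) : ℝ) * (1 / M) := by
      calc ∑ j ∈ Finset.Ico k0 M, f j ≤ ∑ _j ∈ Finset.Ico k0 M, 1 / (M : ℝ) :=
            Finset.sum_le_sum (fun j _ => min_le_left _ _)
        _ = ((M - k0 : ℕ) : ℝ) * (1 / M) := by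
            rw [Finset.sum_const, Nat.card_Ico, nsmul_eq_mul]
    have hcast : ((M - k0 : ℕ) : ℝ) = (M : ℝ) - k0 := by
      exact Nat.cast_sub hk0M
    have hMT : (M : ℝ) * T ≤ (k0 : ℝ) + 1 := by
      rcases le_or_gt (⌊(M : ℝ) * T⌋₊) M with h | h
      · have : k0 = ⌊(M : ℝ) * T⌋₊ := min_eq_left h
        rw [this]
        exact (Nat.lt_floor_add_one _).le
      · have : k0 = M := min_eq_right h.le
        rw [this]
        nlinarith
    have hfinal : ((M : ℝ) - k0) * (1 / M) ≤ (1 - T) + 1 / M := by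
      have h6 : (M : ℝ) - k0 ≤ (M : ℝ) - M * T + 1 := by linarith
      have h7 : ((M : ℝ) - k0) * (1 / M) ≤ ((M : ℝ) - M * T + 1) * (1 / M) :=
        mul_le_mul_of_nonneg_right h6 (by positivity)
      have h8 : ((M : ℝ) - M * T + 1) * (1 / M) = (1 - T) + 1 / M := by
        field_simp
      linarith
    rw [Finset.range_eq_Ico, ← hsplit, hzero, zero_add]
    rw [hcast] at hbound
    linarith
  -- assembly
  rw [opErr, tv_identity _ _ (by rw [sum_push hp φ, sum_unif hM])]
  have hsum1 : ∑ i : Fin M, max 0 (unif M i - push p φ i)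
      ≤ ∑ i : Fin M, (γ + f (i : ℕ)) := Finset.sum_le_sum (fun i _ => hper i)
  have hsum2 : ∑ i : Fin M, (γ + f (i : ℕ)) = (M : ℝ) * γ + ∑ j ∈ Finset.range M, f j := by
    rw [Finset.sum_add_distrib, Finset.sum_const, Finset.card_univ, Fintype.card_fin,
      nsmul_eq_mul, Fin.sum_univ_eq_sum_range f M]
  have := h1T
  linarith
end Direct


section Helpers
variable {Ω : Type*} {p : Ω → ℝ}

lemma opErr_nonneg {M : ℕ} (φ : Ω → Fin M) : 0 ≤ opErr p φ := by
  unfold opErr tvHalf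
  positivity

lemma opErr_le_one (hp : HasSum p 1) (hnn : ∀ ω, 0 ≤ p ω) {M : ℕ} (hM : 0 < M)
    (φ : Ω → Fin M) : opErr p φ ≤ 1 := by
  unfold opErr tvHalf
  have h1 : ∑ i, |push p φ i - unif M i| ≤ ∑ i, (push p φ i + unif M i) := by
    refine Finset.sum_le_sum fun i _ => ?_
    have h2 : 0 ≤ push p φ i := prob_nonneg hnn _
    have h3 : (0:ℝ) ≤ unif M i := by
      show (0:ℝ) ≤ 1 / M; positivity
    rw [abs_sub_le_iff]; constructor <;> linarith
  rw [Finset.sum_add_distrib, sum_push hp, sum_unif hM] at h1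
  linarith

lemma opErr_M_one (hp : HasSum p 1) (φ : Ω → Fin 1) : opErr p φ = 0 := by
  unfold opErr tvHalf
  rw [Fin.sum_univ_one]
  have h1 : push p φ 0 = 1 := by
    have : {ω | φ ω = 0} = (Set.univ : Set Ω) := by
      ext ω; simp [Subsingleton.elim (φ ω) 0]
    rw [push, this, prob, tsum_univ, hp.tsum_eq]
  rw [h1]
  norm_num [unif]

/-- The target set in the theorem statement. -/
def Wset (p : Ω → ℝ) (n : ℕ) (a : ℝ) : Set Ω := {ω | -(1 / (n : ℝ)) * Real.log (p ω) < a}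

lemma Wset_empty (hp : HasSum p 1) (hnn : ∀ ω, 0 ≤ p ω) {a : ℝ} (ha : a ≤ 0) (n : ℕ) :
    prob p (Wset p n a) = 0 := by
  refine prob_zero_set hnn fun ω hω => ?_
  exfalso
  simp only [Wset, Set.mem_setOf_eq] at hω
  have hp1 : p ω ≤ 1 := le_hasSum hp ω (fun ω' _ => hnn ω')
  rcases Nat.eq_zero_or_pos n with h0 | hpos
  · rw [h0] at hω
    norm_num at hω
    linarith
  · have hn : (0:ℝ) < n := by exact_mod_cast hpos
    have hL : Real.log (p ω) > 0 := by
      by_contra hL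
      push_neg at hL
      have : -(1 / (n:ℝ)) * Real.log (p ω) ≥ 0 := by
        have : 0 ≤ (1/(n:ℝ)) := by positivity
        nlinarith
      linarith
    rcases eq_or_lt_of_le (hnn ω) with h | h
    · rw [← h, Real.log_zero] at hL; linarith
    · have := Real.log_nonpos (le_of_lt h) hp1
      linarith

lemma Wset_mono (hp : Summable p) (hnn : ∀ ω, 0 ≤ p ω) {a b : ℝ} (hab : a ≤ b) (n : ℕ) :
    prob p (Wset p n a) ≤ prob p (Wset p n b) :=
  prob_mono hp hnn (fun ω hω => lt_of_lt_of_le hω hab)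

lemma direct_apply [Countable Ω] (hp : HasSum p 1) (hnn : ∀ ω, 0 ≤ p ω) {a'' : ℝ}
    (ha'' : 0 < a'') (n : ℕ) {M : ℕ} (hM : 0 < M) :
    ∃ φ : Ω → Fin M, opErr p φ ≤
      prob p (Wset p n a'') + M * Real.exp (-(n:ℝ) * a'') + 1 / M := by
  rcases Nat.eq_zero_or_pos n with rfl | hn
  · refine ⟨fun _ => ⟨0, hM⟩, ?_⟩
    have hW : prob p (Wset p 0 a'') = 1 := by
      have hWu : Wset p 0 a'' = Set.univ := by
        ext ω
        simp only [Wset, Set.mem_setOf_eq, Set.mem_univ, iff_true, Nat.cast_zero]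
        norm_num
        exact ha''
      rw [hWu, prob, tsum_univ, hp.tsum_eq]
    rw [hW]
    have hMR : (0:ℝ) < M := by exact_mod_cast hM
    have h1 : opErr p (fun _ => (⟨0, hM⟩ : Fin M)) ≤ 1 := opErr_le_one hp hnn hM _
    have h2 : (0:ℝ) ≤ (M:ℝ) * Real.exp (-(0:ℕ) * a'') := by positivity
    have h3 : (0:ℝ) ≤ 1 / (M:ℝ) := by positivity
    norm_num [Real.exp_zero] at h2 ⊢
    have h4 : (0:ℝ) ≤ (M:ℝ)⁻¹ := by positivity
    linarith
  have hnR : (0:ℝ) < n := by exact_mod_cast hn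
  obtain ⟨φ, hφ⟩ := direct_bound hp hnn hM (γ := Real.exp (-(n:ℝ) * a'')) (Real.exp_pos _)
  refine ⟨φ, le_trans hφ ?_⟩
  have hsub : {ω | Real.exp (-(n:ℝ) * a'') < p ω} ⊆ Wset p n a'' := by
    intro ω hω
    simp only [Set.mem_setOf_eq] at hω
    have hpos : 0 < p ω := lt_trans (Real.exp_pos _) hω
    have hlog : -(n:ℝ) * a'' < Real.log (p ω) :=
      (Real.lt_log_iff_exp_lt hpos).2 hω
    show -(1 / (n:ℝ)) * Real.log (p ω) < a''
    have h2 : -(1 / (n:ℝ)) * Real.log (p ω) < -(1 / (n:ℝ)) * (-(n:ℝ) * a'') := by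
      apply mul_lt_mul_of_neg_left hlog
      simp only [neg_lt, neg_zero]
      positivity
    have h3 : -(1 / (n:ℝ)) * (-(n:ℝ) * a'') = a'' := by
      field_simp
    linarith
  have := prob_mono hp.summable hnn hsub
  linarith

lemma converse_apply (hp : HasSum p 1) (hnn : ∀ ω, 0 ≤ p ω) {M : ℕ} (hM : 0 < M)
    (φ : Ω → Fin M) (a : ℝ) {n : ℕ} (hn : 1 ≤ n) :
    prob p (Wset p n a) ≤ opErr p φ + Real.exp ((n:ℝ) * a) / M := by
  have hnR : (0:ℝ) < n := by exact_mod_cast hn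
  set c : ℝ := Real.exp (-(n:ℝ) * a) with hc
  have hcpos : 0 < c := Real.exp_pos _
  have hsub : Wset p n a ⊆ {ω | c < p ω} ∪ {ω | p ω = 0} := by
    intro ω hω
    simp only [Wset, Set.mem_setOf_eq] at hω
    rcases eq_or_lt_of_le (hnn ω) with h | h
    · exact Or.inr h.symm
    · left
      show c < p ω
      rw [hc, ← Real.lt_log_iff_exp_lt h]
      have hmul : (-(1 / (n:ℝ)) * Real.log (p ω)) * n < a * n :=
        mul_lt_mul_of_pos_right hω hnR
      have hsimp : (-(1 / (n:ℝ)) * Real.log (p ω)) * n = -Real.log (p ω) := by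
        field_simp
      rw [hsimp] at hmul
      nlinarith [hmul]
  calc prob p (Wset p n a) ≤ prob p ({ω | c < p ω} ∪ {ω | p ω = 0}) :=
        prob_mono hp.summable hnn hsub
    _ ≤ prob p {ω | c < p ω} + prob p {ω | p ω = 0} :=
        prob_union_le hp.summable hnn _ _
    _ = prob p {ω | c < p ω} := by
        have hz : prob p {ω : Ω | p ω = 0} = 0 := prob_zero_set hnn (fun ω hω => hω)
        rw [hz, add_zero]
    _ ≤ opErr p φ + 1 / (c * M) := converse_bound hp hnn hM φ hcpos
    _ = opErr p φ + Real.exp ((n:ℝ) * a) / M := by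
        rw [hc, neg_mul, Real.exp_neg]
        congr 1
        field_simp
end Helpers


section SeqHelpers

lemma exp_neg_tendsto {x : ℝ} (hx : 0 < x) :
    Tendsto (fun n : ℕ => Real.exp (-(n:ℝ) * x)) atTop (nhds 0) := by
  apply Real.tendsto_exp_atBot.comp
  apply Tendsto.atBot_mul_const hx
  exact tendsto_neg_atBot_iff.2 tendsto_natCast_atTop_atTop

lemma limsup_le_of_le_add {f g s : ℕ → ℝ} {ε : ℝ}
    (hf0 : ∀ n, 0 ≤ f n) (hg1 : ∀ n, g n ≤ 1)
    (hle : ∀ᶠ n in atTop, f n ≤ g n + s n) (hs : Tendsto s atTop (nhds 0))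
    (hg : Filter.limsup g atTop ≤ ε) : Filter.limsup f atTop ≤ ε := by
  refine le_of_forall_pos_le_add fun δ hδ => ?_
  have hgev : ∀ᶠ n in atTop, g n < ε + δ/2 :=
    eventually_lt_of_limsup_lt (lt_of_le_of_lt hg (by linarith))
      (isBoundedUnder_of ⟨1, hg1⟩)
  have hsev : ∀ᶠ n in atTop, s n < δ/2 :=
    hs.eventually (eventually_lt_nhds (show (0:ℝ) < δ/2 by linarith))
  have hev : ∀ᶠ n in atTop, f n ≤ ε + δ := by
    filter_upwards [hle, hgev, hsev] with n h1 h2 h3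
    linarith
  exact limsup_le_of_le (isCoboundedUnder_le_of_le atTop hf0) hev

lemma liminf_le_of_le_add {f g s : ℕ → ℝ} {ε : ℝ}
    (hf0 : ∀ n, 0 ≤ f n) (hg1 : ∀ n, g n ≤ 1)
    (hle : ∀ᶠ n in atTop, f n ≤ g n + s n) (hs : Tendsto s atTop (nhds 0))
    (hg : Filter.liminf g atTop ≤ ε) : Filter.liminf f atTop ≤ ε := by
  refine le_of_forall_pos_le_add fun δ hδ => ?_
  have hgfr : ∃ᶠ n in atTop, g n < ε + δ/2 :=
    frequently_lt_of_liminf_lt (isCoboundedUnder_ge_of_le atTop hg1)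
      (lt_of_le_of_lt hg (by linarith))
  have hsev : ∀ᶠ n in atTop, s n < δ/2 :=
    hs.eventually (eventually_lt_nhds (show (0:ℝ) < δ/2 by linarith))
  have hfr : ∃ᶠ n in atTop, f n ≤ ε + δ := by
    refine (hgfr.and_eventually (hle.and hsev)).mono ?_
    rintro n ⟨h2, h1, h3⟩
    linarith
  exact liminf_le_of_frequently_le hfr (isBoundedUnder_of ⟨0, hf0⟩)

lemma liminf_le_of_frequently_le_add {f g s : ℕ → ℝ} {ε : ℝ}
    (hf0 : ∀ n, 0 ≤ f n) (hg1 : ∀ n, g n ≤ 1)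
    (hle : ∃ᶠ n in atTop, f n ≤ g n + s n) (hs : Tendsto s atTop (nhds 0))
    (hg : Filter.limsup g atTop ≤ ε) : Filter.liminf f atTop ≤ ε := by
  refine le_of_forall_pos_le_add fun δ hδ => ?_
  have hgev : ∀ᶠ n in atTop, g n < ε + δ/2 :=
    eventually_lt_of_limsup_lt (lt_of_le_of_lt hg (by linarith))
      (isBoundedUnder_of ⟨1, hg1⟩)
  have hsev : ∀ᶠ n in atTop, s n < δ/2 :=
    hs.eventually (eventually_lt_nhds (show (0:ℝ) < δ/2 by linarith))
  have hfr : ∃ᶠ n in atTop, f n ≤ ε + δ := by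
    refine (hle.and_eventually (hgev.and hsev)).mono ?_
    rintro n ⟨h1, h2, h3⟩
    linarith
  exact liminf_le_of_frequently_le hfr (isBoundedUnder_of ⟨0, hf0⟩)

lemma log_ceil_tendsto {a' : ℝ} (ha' : 0 < a') :
    Tendsto (fun n : ℕ => Real.log (⌈Real.exp ((n:ℝ) * a')⌉₊ : ℝ) / n) atTop (nhds a') := by
  have key : ∀ n : ℕ, 1 ≤ n →
      a' ≤ Real.log (⌈Real.exp ((n:ℝ) * a')⌉₊ : ℝ) / n ∧
      Real.log (⌈Real.exp ((n:ℝ) * a')⌉₊ : ℝ) / n ≤ a' + 1 / n := by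
    intro n hn
    have hnR : (0:ℝ) < n := by exact_mod_cast hn
    set x : ℝ := Real.exp ((n:ℝ) * a') with hx
    have hxpos : 0 < x := Real.exp_pos _
    have hx1 : 1 ≤ x := by
      rw [hx, Real.one_le_exp_iff]
      positivity
    have hceil_ge : x ≤ (⌈x⌉₊ : ℝ) := Nat.le_ceil x
    have hceil_lt : (⌈x⌉₊ : ℝ) < x + 1 := Nat.ceil_lt_add_one hxpos.le
    have hcpos : (0:ℝ) < (⌈x⌉₊ : ℝ) := lt_of_lt_of_le hxpos hceil_ge
    constructor
    · have h1 : (n:ℝ) * a' ≤ Real.log (⌈x⌉₊ : ℝ) := by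
        calc (n:ℝ) * a' = Real.log x := (Real.log_exp _).symm
          _ ≤ Real.log (⌈x⌉₊ : ℝ) := Real.log_le_log hxpos hceil_ge
      rw [le_div_iff₀ hnR]
      linarith
    · have h2 : Real.log (⌈x⌉₊ : ℝ) ≤ Real.log 2 + (n:ℝ) * a' := by
        calc Real.log (⌈x⌉₊ : ℝ) ≤ Real.log (2 * x) := by
              apply Real.log_le_log hcpos
              linarith
          _ = Real.log 2 + Real.log x := Real.log_mul (by norm_num) (ne_of_gt hxpos)
          _ = Real.log 2 + (n:ℝ) * a' := by rw [Real.log_exp]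
      have hlog2 : Real.log 2 ≤ 1 := by
        have := Real.log_le_sub_one_of_pos (show (0:ℝ) < 2 by norm_num)
        linarith
      rw [div_le_iff₀ hnR]
      have : (a' + 1 / n) * n = a' * n + 1 := by field_simp
      rw [this]
      nlinarith
  have hlow : ∀ᶠ n : ℕ in atTop, a' ≤ Real.log (⌈Real.exp ((n:ℝ) * a')⌉₊ : ℝ) / n := by
    filter_upwards [eventually_ge_atTop 1] with n hn
    exact (key n hn).1
  have hup : ∀ᶠ n : ℕ in atTop, Real.log (⌈Real.exp ((n:ℝ) * a')⌉₊ : ℝ) / n ≤ a' + 1 / n := by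
    filter_upwards [eventually_ge_atTop 1] with n hn
    exact (key n hn).2
  have htop : Tendsto (fun n : ℕ => a' + 1 / (n:ℝ)) atTop (nhds a') := by
    have := tendsto_one_div_atTop_nhds_zero_nat (𝕜 := ℝ)
    have h2 := (tendsto_const_nhds (x := a') (f := atTop (α := ℕ))).add this
    simpa using h2
  exact tendsto_of_tendsto_of_tendsto_of_le_of_le' tendsto_const_nhds htop hlow hup

lemma tail_tendsto {a' a'' : ℝ} (h1 : 0 < a') (h2 : a' < a'') :
    Tendsto (fun n : ℕ => (⌈Real.exp ((n:ℝ) * a')⌉₊ : ℝ) * Real.exp (-(n:ℝ) * a'')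
      + 1 / (⌈Real.exp ((n:ℝ) * a')⌉₊ : ℝ)) atTop (nhds 0) := by
  have hbound : ∀ n : ℕ,
      (⌈Real.exp ((n:ℝ) * a')⌉₊ : ℝ) * Real.exp (-(n:ℝ) * a'')
        + 1 / (⌈Real.exp ((n:ℝ) * a')⌉₊ : ℝ)
      ≤ Real.exp (-(n:ℝ) * (a'' - a')) + Real.exp (-(n:ℝ) * a'') + Real.exp (-(n:ℝ) * a') := by
    intro n
    set x : ℝ := Real.exp ((n:ℝ) * a') with hx
    have hxpos : 0 < x := Real.exp_pos _
    have hceil_ge : x ≤ (⌈x⌉₊ : ℝ) := Nat.le_ceil x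
    have hceil_lt : (⌈x⌉₊ : ℝ) < x + 1 := Nat.ceil_lt_add_one hxpos.le
    have hcpos : (0:ℝ) < (⌈x⌉₊ : ℝ) := lt_of_lt_of_le hxpos hceil_ge
    have hterm1 : (⌈x⌉₊ : ℝ) * Real.exp (-(n:ℝ) * a'')
        ≤ Real.exp (-(n:ℝ) * (a'' - a')) + Real.exp (-(n:ℝ) * a'') := by
      have he : x * Real.exp (-(n:ℝ) * a'') = Real.exp (-(n:ℝ) * (a'' - a')) := by
        rw [hx, ← Real.exp_add]
        congr 1
        ring
      have := Real.exp_pos (-(n:ℝ) * a'')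
      nlinarith
    have hterm2 : 1 / (⌈x⌉₊ : ℝ) ≤ Real.exp (-(n:ℝ) * a') := by
      rw [div_le_iff₀ hcpos]
      have he : Real.exp (-(n:ℝ) * a') * x = 1 := by
        rw [hx, ← Real.exp_add]
        norm_num
      calc (1:ℝ) = Real.exp (-(n:ℝ) * a') * x := he.symm
        _ ≤ Real.exp (-(n:ℝ) * a') * (⌈x⌉₊ : ℝ) := by
            apply mul_le_mul_of_nonneg_left hceil_ge (Real.exp_pos _).le
    linarith
  have hnn : ∀ n : ℕ, 0 ≤ (⌈Real.exp ((n:ℝ) * a')⌉₊ : ℝ) * Real.exp (-(n:ℝ) * a'')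
      + 1 / (⌈Real.exp ((n:ℝ) * a')⌉₊ : ℝ) := by
    intro n
    have h3 : (0:ℝ) < (⌈Real.exp ((n:ℝ) * a')⌉₊ : ℝ) :=
      lt_of_lt_of_le (Real.exp_pos _) (Nat.le_ceil _)
    positivity
  have htop : Tendsto (fun n : ℕ => Real.exp (-(n:ℝ) * (a'' - a')) + Real.exp (-(n:ℝ) * a'')
      + Real.exp (-(n:ℝ) * a')) atTop (nhds 0) := by
    have t1 := exp_neg_tendsto (show 0 < a'' - a' by linarith)
    have t2 := exp_neg_tendsto (show 0 < a'' by linarith)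
    have t3 := exp_neg_tendsto h1
    have := (t1.add t2).add t3
    simpa using this
  exact tendsto_of_tendsto_of_tendsto_of_le_of_le' tendsto_const_nhds htop
    (Filter.Eventually.of_forall hnn) (Filter.Eventually.of_forall hbound)

-- EReal helpers
lemma ereal_nonneg_of {y : EReal} (h : ∀ a : ℝ, a < 0 → (a : EReal) ≤ y) : 0 ≤ y := by
  by_contra hlt
  push_neg at hlt
  obtain ⟨c, hc1, hc2⟩ := exists_between hlt
  induction c using EReal.rec with
  | bot => exact not_lt_bot hc1
  | coe b =>
      have hb : b < 0 := by
        have : (b : EReal) < ((0:ℝ) : EReal) := by rwa [EReal.coe_zero]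
        exact_mod_cast this
      exact absurd hc1 (not_lt.2 (h b hb))
  | top => exact not_top_lt hc2

lemma ereal_le_of_forall {x y : EReal} (h : ∀ a : ℝ, (a : EReal) < x → (a : EReal) ≤ y) :
    x ≤ y := by
  by_contra hlt
  push_neg at hlt
  obtain ⟨c, hc1, hc2⟩ := exists_between hlt
  induction c using EReal.rec with
  | bot => exact not_lt_bot hc1
  | coe b => exact absurd hc1 (not_lt.2 (h b hc2))
  | top => exact not_top_lt hc2

lemma ereal_eventually_of_lt_liminf {r : ℕ → ℝ} {b : ℝ}
    (h : (b : EReal) < Filter.liminf (fun n => ((r n : ℝ) : EReal)) atTop) :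
    ∀ᶠ n in atTop, b < r n := by
  have := eventually_lt_of_lt_liminf h
    (isBoundedUnder_of ⟨⊥, fun n => bot_le⟩)
  exact this.mono fun n hn => by exact_mod_cast hn

lemma ereal_frequently_of_lt_limsup {r : ℕ → ℝ} {b : ℝ}
    (h : (b : EReal) < Filter.limsup (fun n => ((r n : ℝ) : EReal)) atTop) :
    ∃ᶠ n in atTop, b < r n := by
  have := frequently_lt_of_lt_limsup
    (isCoboundedUnder_le_of_le atTop (fun n => bot_le (a := ((r n : ℝ) : EReal)))) h
  exact this.mono fun n hn => by exact_mod_cast hn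

lemma ereal_liminf_coe_eq {r : ℕ → ℝ} {a : ℝ} (h : Tendsto r atTop (nhds a)) :
    Filter.liminf (fun n => ((r n : ℝ) : EReal)) atTop = (a : EReal) :=
  Filter.Tendsto.liminf_eq (EReal.tendsto_coe.2 h)

lemma ereal_limsup_coe_eq {r : ℕ → ℝ} {a : ℝ} (h : Tendsto r atTop (nhds a)) :
    Filter.limsup (fun n => ((r n : ℝ) : EReal)) atTop = (a : EReal) :=
  Filter.Tendsto.limsup_eq (EReal.tendsto_coe.2 h)

lemma ereal_le_limsup_of_subseq {f : ℕ → EReal} {u : ℕ → ℕ} (hu : StrictMono u) {a : EReal}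
    (h : Tendsto (fun k => f (u k)) atTop (nhds a)) :
    a ≤ Filter.limsup f atTop := by
  have h1 : Filter.limsup (fun k => f (u k)) atTop = a := h.limsup_eq
  rw [← h1]
  refine limsup_le_limsup_of_le (hu.tendsto_atTop) ?_ ?_
  · exact isCoboundedUnder_le_of_le atTop (fun n => bot_le)
  · exact isBoundedUnder_of ⟨⊤, fun n => le_top⟩

end SeqHelpers


section MainHelpers

lemma ereal_exists_real_between {x : EReal} {a : ℝ} (h : (a:EReal) < x) :
    ∃ b : ℝ, a < b ∧ (b : EReal) < x := by
  obtain ⟨c, hc1, hc2⟩ := exists_between h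
  induction c using EReal.rec with
  | bot => exact absurd hc1 not_lt_bot
  | coe b => exact ⟨b, by exact_mod_cast hc1, hc2⟩
  | top => exact absurd hc2 not_top_lt

lemma opErr_eq_zero_of_eq_one {Ω : Type*} {p : Ω → ℝ} (hp : HasSum p 1) {M : ℕ} (hM : M = 1)
    (φ : Ω → Fin M) : opErr p φ = 0 := by
  subst hM; exact opErr_M_one hp φ

variable {Ω : ℕ → Type} [∀ n, Countable (Ω n)] {p : ∀ n, Ω n → ℝ}

lemma conv_step (hnonneg : ∀ n ω, 0 ≤ p n ω) (hsum : ∀ n, HasSum (p n) 1)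
    {M : ℕ → ℕ} (hpos : ∀ n, 0 < M n) (φ : ∀ n, Ω n → Fin (M n)) {a a'' : ℝ}
    {n : ℕ} (hn : 1 ≤ n) (h1 : a'' < Real.log (M n) / n) :
    prob (p n) (Wset (p n) n a) ≤ opErr (p n) (φ n) + Real.exp (-(n:ℝ) * (a'' - a)) := by
  have hMn : (0:ℝ) < M n := by exact_mod_cast hpos n
  have hnR : (0:ℝ) < n := by exact_mod_cast hn
  have hMlow : Real.exp ((n:ℝ) * a'') < (M n : ℝ) := by
    rw [← Real.exp_log hMn]
    apply Real.exp_lt_exp.2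
    rw [lt_div_iff₀ hnR] at h1
    nlinarith [h1]
  have hconv := converse_apply (hsum n) (hnonneg n) (hpos n) (φ n) a hn
  have hbnd : Real.exp ((n:ℝ) * a) / (M n : ℝ) ≤ Real.exp (-(n:ℝ) * (a'' - a)) := by
    rw [div_le_iff₀ hMn]
    calc Real.exp ((n:ℝ)*a) = Real.exp (-(n:ℝ)*(a''-a)) * Real.exp ((n:ℝ)*a'') := by
          rw [← Real.exp_add]; congr 1; ring
      _ ≤ Real.exp (-(n:ℝ)*(a''-a)) * (M n : ℝ) :=
          mul_le_mul_of_nonneg_left hMlow.le (Real.exp_pos _).le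
  exact le_trans hconv (by linarith)

lemma direct_construction (hnonneg : ∀ n ω, 0 ≤ p n ω) (hsum : ∀ n, HasSum (p n) 1)
    {b a'' a : ℝ} (hb0 : 0 < b) (hba'' : b < a'') (ha''a : a'' ≤ a) :
    ∃ (M : ℕ → ℕ) (φ : ∀ n, Ω n → Fin (M n)), (∀ n, 0 < M n) ∧
      (∀ n : ℕ, opErr (p n) (φ n) ≤ prob (p n) (Wset (p n) n a) +
        ((M n : ℝ) * Real.exp (-(n:ℝ) * a'') + 1 / (M n : ℝ))) ∧
      Tendsto (fun n : ℕ => (M n : ℝ) * Real.exp (-(n:ℝ) * a'') + 1 / (M n : ℝ))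
        atTop (nhds 0) ∧
      Tendsto (fun n : ℕ => Real.log (M n) / n) atTop (nhds b) := by
  have ha''0 : 0 < a'' := lt_trans hb0 hba''
  set M : ℕ → ℕ := fun n => ⌈Real.exp ((n:ℝ) * b)⌉₊ with hMdef
  have hpos : ∀ n, 0 < M n := fun n => Nat.ceil_pos.2 (Real.exp_pos _)
  set φ : ∀ n, Ω n → Fin (M n) := fun n =>
    (direct_apply (hsum n) (hnonneg n) ha''0 n (hpos n)).choose with hφdef
  have hspec : ∀ n, opErr (p n) (φ n) ≤
      prob (p n) (Wset (p n) n a'') + (M n : ℝ) * Real.exp (-(n:ℝ) * a'') + 1 / (M n : ℝ) :=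
    fun n => (direct_apply (hsum n) (hnonneg n) ha''0 n (hpos n)).choose_spec
  refine ⟨M, φ, hpos, ?_, ?_, ?_⟩
  · intro n
    have hmono : prob (p n) (Wset (p n) n a'') ≤ prob (p n) (Wset (p n) n a) :=
      Wset_mono (hsum n).summable (hnonneg n) ha''a n
    have := hspec n
    linarith
  · exact tail_tendsto hb0 hba''
  · exact log_ceil_tendsto hb0

end MainHelpers

/-- For every general source and every `0 ≤ ε < 1`,
`S₊(ε|p̄) = H̲₊(ε|p̄)`, and `S₊†(ε|p̄) = S₊‡(ε|p̄) = H̄₊(ε|p̄)`. -/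
theorem intrinsic_randomness_plus_rates_eq_spectral
    (Ω : ℕ → Type) [∀ n, Countable (Ω n)]
    (p : ∀ n, Ω n → ℝ)
    (hnonneg : ∀ n ω, 0 ≤ p n ω)
    (hsum : ∀ n, HasSum (p n) 1)
    (ε : ℝ) (hε0 : 0 ≤ ε) (hε1 : ε < 1) :
    (sSup { r : EReal |
      ∃ (M : ℕ → ℕ) (φ : ∀ n, Ω n → Fin (M n)),
        (∀ n, 0 < M n) ∧
        Filter.limsup (fun n => opErr (p n) (φ n)) atTop ≤ ε ∧
        r = Filter.liminf (fun n => ((Real.log (M n) / n : ℝ) : EReal)) atTop }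
      = sSup { x : EReal | ∃ a : ℝ, x = (a : EReal) ∧
          Filter.limsup
            (fun n => prob (p n) {ω | -(1 / (n : ℝ)) * Real.log (p n ω) < a}) atTop ≤ ε })
    ∧
    (sSup { r : EReal |
      ∃ (M : ℕ → ℕ) (φ : ∀ n, Ω n → Fin (M n)),
        (∀ n, 0 < M n) ∧
        Filter.liminf (fun n => opErr (p n) (φ n)) atTop ≤ ε ∧
        r = Filter.liminf (fun n => ((Real.log (M n) / n : ℝ) : EReal)) atTop }
      = sSup { x : EReal | ∃ a : ℝ, x = (a : EReal) ∧
          Filter.liminf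
            (fun n => prob (p n) {ω | -(1 / (n : ℝ)) * Real.log (p n ω) < a}) atTop ≤ ε })
    ∧
    (sSup { r : EReal |
      ∃ (M : ℕ → ℕ) (φ : ∀ n, Ω n → Fin (M n)),
        (∀ n, 0 < M n) ∧
        Filter.limsup (fun n => opErr (p n) (φ n)) atTop ≤ ε ∧
        r = Filter.limsup (fun n => ((Real.log (M n) / n : ℝ) : EReal)) atTop }
      = sSup { x : EReal | ∃ a : ℝ, x = (a : EReal) ∧
          Filter.liminf
            (fun n => prob (p n) {ω | -(1 / (n : ℝ)) * Real.log (p n ω) < a}) atTop ≤ ε }) := by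
  classical
  have hWnn : ∀ (a : ℝ) (n : ℕ),
      0 ≤ prob (p n) {ω | -(1 / (n : ℝ)) * Real.log (p n ω) < a} :=
    fun a n => prob_nonneg (hnonneg n) _
  have hW1 : ∀ (a : ℝ) (n : ℕ),
      prob (p n) {ω | -(1 / (n : ℝ)) * Real.log (p n ω) < a} ≤ 1 :=
    fun a n => prob_le_one (hsum n) (hnonneg n) _
  have hW0 : ∀ (a : ℝ), a ≤ 0 →
      (fun n : ℕ => prob (p n) {ω | -(1 / (n : ℝ)) * Real.log (p n ω) < a})
        = fun _ => (0:ℝ) :=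
    fun a ha => funext fun n => Wset_empty (hsum n) (hnonneg n) ha n
  -- baseline operation sequence
  set Mb : ℕ → ℕ := fun _ => 1 with hMbdef
  set φb : ∀ n, Ω n → Fin (Mb n) := fun n _ => ⟨0, Nat.one_pos⟩ with hφbdef
  have hMbpos : ∀ n, 0 < Mb n := fun _ => Nat.one_pos
  have herrb : (fun n => opErr (p n) (φb n)) = fun _ => (0:ℝ) :=
    funext fun n => opErr_M_one (hsum n) (φb n)
  have hrateb : (fun n : ℕ => ((Real.log (Mb n) / n : ℝ) : EReal)) = fun _ => (0:EReal) := by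
    funext n
    norm_num [hMbdef, Real.log_one]
  refine ⟨?_, ?_, ?_⟩
  -- STATEMENT 1
  · refine le_antisymm (sSup_le ?_) (sSup_le ?_)
    · rintro r ⟨M, φ, hpos, herr, rfl⟩
      refine ereal_le_of_forall (fun a ha => ?_)
      rcases le_or_gt a 0 with ha0 | ha0
      · refine le_sSup ⟨a, rfl, ?_⟩
        rw [hW0 a ha0, limsup_const]
        exact hε0
      · obtain ⟨a'', ha1, ha2⟩ := ereal_exists_real_between ha
        have hev : ∀ᶠ n in atTop, a'' < Real.log (M n) / n :=
          ereal_eventually_of_lt_liminf ha2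
        have hle : ∀ᶠ n in atTop,
            prob (p n) {ω | -(1 / (n : ℝ)) * Real.log (p n ω) < a}
              ≤ opErr (p n) (φ n) + Real.exp (-(n:ℝ) * (a'' - a)) := by
          filter_upwards [hev, eventually_ge_atTop 1] with n h1 h2
          exact conv_step hnonneg hsum hpos φ h2 h1
        refine le_sSup ⟨a, rfl, ?_⟩
        exact limsup_le_of_le_add (hWnn a)
          (fun n => opErr_le_one (hsum n) (hnonneg n) (hpos n) (φ n)) hle
          (exp_neg_tendsto (by linarith)) herr
    · rintro x ⟨a, rfl, hcond⟩
      have h0le : (0:EReal) ≤ sSup { r : EReal |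
          ∃ (M : ℕ → ℕ) (φ : ∀ n, Ω n → Fin (M n)),
            (∀ n, 0 < M n) ∧
            Filter.limsup (fun n => opErr (p n) (φ n)) atTop ≤ ε ∧
            r = Filter.liminf (fun n => ((Real.log (M n) / n : ℝ) : EReal)) atTop } := by
        refine le_trans (le_of_eq ?_) (le_sSup ⟨Mb, φb, hMbpos,
          by rw [herrb, limsup_const]; exact hε0, rfl⟩)
        rw [hrateb, liminf_const]
      refine ereal_le_of_forall (fun b hb => ?_)
      have hba : b < a := by exact_mod_cast hb
      rcases le_or_gt b 0 with hb0 | hb0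
      · exact le_trans (by exact_mod_cast hb0) h0le
      · obtain ⟨M, φ, hpos, hle, htail, hrate⟩ :=
          direct_construction hnonneg hsum hb0
            (show b < (b+a)/2 by linarith) (show (b+a)/2 ≤ a by linarith)
        have herr : Filter.limsup (fun n => opErr (p n) (φ n)) atTop ≤ ε :=
          limsup_le_of_le_add (fun n => opErr_nonneg _) (hW1 a)
            (Filter.Eventually.of_forall hle) htail hcond
        have hr : Filter.liminf (fun n => ((Real.log (M n) / n : ℝ) : EReal)) atTop
            = (b:EReal) := ereal_liminf_coe_eq hrate
        refine le_trans (le_of_eq hr.symm) (le_sSup ⟨M, φ, hpos, herr, rfl⟩)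
  -- STATEMENT 2
  · refine le_antisymm (sSup_le ?_) (sSup_le ?_)
    · rintro r ⟨M, φ, hpos, herr, rfl⟩
      refine ereal_le_of_forall (fun a ha => ?_)
      rcases le_or_gt a 0 with ha0 | ha0
      · refine le_sSup ⟨a, rfl, ?_⟩
        rw [hW0 a ha0, liminf_const]
        exact hε0
      · obtain ⟨a'', ha1, ha2⟩ := ereal_exists_real_between ha
        have hev : ∀ᶠ n in atTop, a'' < Real.log (M n) / n :=
          ereal_eventually_of_lt_liminf ha2
        have hle : ∀ᶠ n in atTop,
            prob (p n) {ω | -(1 / (n : ℝ)) * Real.log (p n ω) < a}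
              ≤ opErr (p n) (φ n) + Real.exp (-(n:ℝ) * (a'' - a)) := by
          filter_upwards [hev, eventually_ge_atTop 1] with n h1 h2
          exact conv_step hnonneg hsum hpos φ h2 h1
        refine le_sSup ⟨a, rfl, ?_⟩
        exact liminf_le_of_le_add (hWnn a)
          (fun n => opErr_le_one (hsum n) (hnonneg n) (hpos n) (φ n)) hle
          (exp_neg_tendsto (by linarith)) herr
    · rintro x ⟨a, rfl, hcond⟩
      have h0le : (0:EReal) ≤ sSup { r : EReal |
          ∃ (M : ℕ → ℕ) (φ : ∀ n, Ω n → Fin (M n)),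
            (∀ n, 0 < M n) ∧
            Filter.liminf (fun n => opErr (p n) (φ n)) atTop ≤ ε ∧
            r = Filter.liminf (fun n => ((Real.log (M n) / n : ℝ) : EReal)) atTop } := by
        refine le_trans (le_of_eq ?_) (le_sSup ⟨Mb, φb, hMbpos,
          by rw [herrb, liminf_const]; exact hε0, rfl⟩)
        rw [hrateb, liminf_const]
      refine ereal_le_of_forall (fun b hb => ?_)
      have hba : b < a := by exact_mod_cast hb
      rcases le_or_gt b 0 with hb0 | hb0
      · exact le_trans (by exact_mod_cast hb0) h0le
      · obtain ⟨M, φ, hpos, hle, htail, hrate⟩ :=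
          direct_construction hnonneg hsum hb0
            (show b < (b+a)/2 by linarith) (show (b+a)/2 ≤ a by linarith)
        have herr : Filter.liminf (fun n => opErr (p n) (φ n)) atTop ≤ ε :=
          liminf_le_of_le_add (fun n => opErr_nonneg _) (hW1 a)
            (Filter.Eventually.of_forall hle) htail hcond
        have hr : Filter.liminf (fun n => ((Real.log (M n) / n : ℝ) : EReal)) atTop
            = (b:EReal) := ereal_liminf_coe_eq hrate
        refine le_trans (le_of_eq hr.symm) (le_sSup ⟨M, φ, hpos, herr, rfl⟩)
  -- STATEMENT 3
  · refine le_antisymm (sSup_le ?_) (sSup_le ?_)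
    · rintro r ⟨M, φ, hpos, herr, rfl⟩
      refine ereal_le_of_forall (fun a ha => ?_)
      rcases le_or_gt a 0 with ha0 | ha0
      · refine le_sSup ⟨a, rfl, ?_⟩
        rw [hW0 a ha0, liminf_const]
        exact hε0
      · obtain ⟨a'', ha1, ha2⟩ := ereal_exists_real_between ha
        have hfr : ∃ᶠ n in atTop, a'' < Real.log (M n) / n :=
          ereal_frequently_of_lt_limsup ha2
        have hle : ∃ᶠ n in atTop,
            prob (p n) {ω | -(1 / (n : ℝ)) * Real.log (p n ω) < a}
              ≤ opErr (p n) (φ n) + Real.exp (-(n:ℝ) * (a'' - a)) := by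
          refine (hfr.and_eventually (eventually_ge_atTop 1)).mono ?_
          rintro n ⟨h1, h2⟩
          exact conv_step hnonneg hsum hpos φ h2 h1
        refine le_sSup ⟨a, rfl, ?_⟩
        exact liminf_le_of_frequently_le_add (hWnn a)
          (fun n => opErr_le_one (hsum n) (hnonneg n) (hpos n) (φ n)) hle
          (exp_neg_tendsto (by linarith)) herr
    · rintro x ⟨a, rfl, hcond⟩
      have h0le : (0:EReal) ≤ sSup { r : EReal |
          ∃ (M : ℕ → ℕ) (φ : ∀ n, Ω n → Fin (M n)),
            (∀ n, 0 < M n) ∧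
            Filter.limsup (fun n => opErr (p n) (φ n)) atTop ≤ ε ∧
            r = Filter.limsup (fun n => ((Real.log (M n) / n : ℝ) : EReal)) atTop } := by
        refine le_trans (le_of_eq ?_) (le_sSup ⟨Mb, φb, hMbpos,
          by rw [herrb, limsup_const]; exact hε0, rfl⟩)
        rw [hrateb, limsup_const]
      refine ereal_le_of_forall (fun b hb => ?_)
      have hba : b < a := by exact_mod_cast hb
      rcases le_or_gt b 0 with hb0 | hb0
      · exact le_trans (by exact_mod_cast hb0) h0le
      · -- mixed construction along a subsequence
        set a'' : ℝ := (b + a)/2 with ha''def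
        have hba'' : b < a'' := by rw [ha''def]; linarith
        have ha''a : a'' ≤ a := by rw [ha''def]; linarith
        have ha''0 : 0 < a'' := lt_trans hb0 hba''
        have hfr : ∀ k : ℕ, ∃ᶠ n in atTop,
            prob (p n) {ω | -(1 / (n : ℝ)) * Real.log (p n ω) < a} < ε + 1/((k:ℝ)+1)
              ∧ k < n := by
          intro k
          have hd : (0:ℝ) < 1/((k:ℝ)+1) := by positivity
          have h1 : Filter.liminf
              (fun n => prob (p n) {ω | -(1 / (n : ℝ)) * Real.log (p n ω) < a}) atTop
              < ε + 1/((k:ℝ)+1) := lt_of_le_of_lt hcond (by linarith)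
          have h2 := frequently_lt_of_liminf_lt
            (isCoboundedUnder_ge_of_le atTop (hW1 a)) h1
          exact h2.and_eventually (eventually_gt_atTop k)
        obtain ⟨u, hu, huP⟩ := Filter.extraction_forall_of_frequently hfr
        set Mf : ℕ → ℕ := fun n =>
          if ∃ k, u k = n then ⌈Real.exp ((n:ℝ) * b)⌉₊ else 1 with hMfdef
        have hMfpos : ∀ n, 0 < Mf n := by
          intro n
          simp only [hMfdef]
          split
          · exact Nat.ceil_pos.2 (Real.exp_pos _)
          · exact Nat.one_pos
        set φf : ∀ n, Ω n → Fin (Mf n) := fun n =>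
          (direct_apply (hsum n) (hnonneg n) ha''0 n (hMfpos n)).choose with hφfdef
        have hφspec : ∀ n, opErr (p n) (φf n) ≤
            prob (p n) (Wset (p n) n a'') + (Mf n : ℝ) * Real.exp (-(n:ℝ) * a'')
              + 1/(Mf n : ℝ) :=
          fun n => (direct_apply (hsum n) (hnonneg n) ha''0 n (hMfpos n)).choose_spec
        have herr : Filter.limsup (fun n => opErr (p n) (φf n)) atTop ≤ ε := by
          refine le_of_forall_pos_le_add fun δ hδ => ?_
          obtain ⟨K, hK⟩ := exists_nat_one_div_lt (show (0:ℝ) < δ/2 by linarith)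
          have hsev : ∀ᶠ n : ℕ in atTop,
              (⌈Real.exp ((n:ℝ)*b)⌉₊:ℝ) * Real.exp (-(n:ℝ)*a'')
                + 1/(⌈Real.exp ((n:ℝ)*b)⌉₊:ℝ) < δ/2 :=
            (tail_tendsto hb0 hba'').eventually (eventually_lt_nhds (by linarith))
          have hev : ∀ᶠ n in atTop, opErr (p n) (φf n) ≤ ε + δ := by
            filter_upwards [hsev, eventually_ge_atTop (u K), eventually_ge_atTop 1]
              with n hs hn hn1
            by_cases hr : ∃ k, u k = n
            · obtain ⟨k, rfl⟩ := hr
              have hkK : K ≤ k := hu.le_iff_le.1 hn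
              have hMn : Mf (u k) = ⌈Real.exp (((u k : ℕ):ℝ) * b)⌉₊ := by
                simp only [hMfdef]
                exact if_pos ⟨k, rfl⟩
              have hMreal : ((Mf (u k) : ℕ) : ℝ) = (⌈Real.exp (((u k : ℕ):ℝ) * b)⌉₊ : ℝ) := by
                rw [hMn]
              have h5 := hφspec (u k)
              rw [hMreal] at h5
              have h6 := (huP k).1
              have h7 : 1/((k:ℝ)+1) ≤ 1/((K:ℝ)+1) := by
                apply one_div_le_one_div_of_le
                · positivity
                · have : (K:ℝ) ≤ k := by exact_mod_cast hkK
                  linarith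
              have hmono : prob (p (u k)) (Wset (p (u k)) (u k) a'')
                  ≤ prob (p (u k)) {ω | -(1 / ((u k : ℕ) : ℝ)) * Real.log (p (u k) ω) < a} :=
                Wset_mono (hsum (u k)).summable (hnonneg (u k)) ha''a (u k)
              linarith
            · have hMn : Mf n = 1 := by
                rw [hMfdef]
                exact if_neg hr
              have hz : opErr (p n) (φf n) = 0 :=
                opErr_eq_zero_of_eq_one (hsum n) hMn (φf n)
              rw [hz]
              linarith
          exact limsup_le_of_le
            (isCoboundedUnder_le_of_le atTop (fun n => opErr_nonneg _)) hev
        have hsub_t : Tendsto (fun k => Real.log ((Mf (u k) : ℕ) : ℝ) / (u k : ℕ))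
            atTop (nhds b) := by
          have h8 : (fun k => Real.log ((Mf (u k) : ℕ) : ℝ) / (u k : ℕ))
              = fun k => Real.log ((⌈Real.exp (((u k : ℕ):ℝ) * b)⌉₊ : ℝ)) / (u k : ℕ) := by
            funext k
            simp only [hMfdef]
            rw [if_pos (⟨k, rfl⟩ : ∃ j, u j = u k)]
          rw [h8]
          exact (log_ceil_tendsto hb0).comp hu.tendsto_atTop
        have hble : (b:EReal) ≤ Filter.limsup
            (fun n => ((Real.log (Mf n) / n : ℝ) : EReal)) atTop :=
          ereal_le_limsup_of_subseq hu (EReal.tendsto_coe.2 hsub_t)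
        exact le_trans hble (le_sSup ⟨Mf, φf, hMfpos, herr, rfl⟩)
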